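/- arXiv:math/9803058 — 4 statements merged into one kernel-verified Lean document; each statement's English description precedes it below -/
import Mathlib

section
/- Let $p$ be an odd prime, $s \geq 1$, and let $a_1, a_2, a_3, b_1, b_2, b_3$ be integers such that $a_i b_i \not\equiv 0 \pmod{p^s}$ for $i = 1,2,3$ and $a_i b_j + a_j b_i \equiv 0 \pmod{p^s}$ for all $i \neq j$. Then $p$ divides $b_1$, $b_2$, and $b_3$. -/
private lemma key (p : ℕ) (hp : p.Prime) (hodd : Odd p) (s : ℕ)
    (a₁ a₂ a₃ b₁ b₂ b₃ : ℤ)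
    (h2 : ¬ ((p : ℤ) ^ s ∣ a₂ * b₂))
    (h3 : ¬ ((p : ℤ) ^ s ∣ a₃ * b₃))
    (h12 : (p : ℤ) ^ s ∣ a₁ * b₂ + a₂ * b₁)
    (h13 : (p : ℤ) ^ s ∣ a₁ * b₃ + a₃ * b₁)
    (h23 : (p : ℤ) ^ s ∣ a₂ * b₃ + a₃ * b₂) :
    (p : ℤ) ∣ b₁ := by
  haveI : Fact p.Prime := ⟨hp⟩
  by_contra hb1
  -- all relevant integers nonzero
  have ha2 : a₂ ≠ 0 := fun h => h2 (by simp [h])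
  have hb2 : b₂ ≠ 0 := fun h => h2 (by simp [h])
  have ha3 : a₃ ≠ 0 := fun h => h3 (by simp [h])
  have hb3 : b₃ ≠ 0 := fun h => h3 (by simp [h])
  -- 2 * (a₂ * b₁ * b₃) is a combination
  have d2 : (p : ℤ) ^ s ∣ 2 * (a₂ * (b₁ * b₃)) := by
    have : 2 * (a₂ * (b₁ * b₃)) =
        b₃ * (a₁ * b₂ + a₂ * b₁) - b₂ * (a₁ * b₃ + a₃ * b₁) + b₁ * (a₂ * b₃ + a₃ * b₂) := by
      ring
    rw [this]
    exact dvd_add (dvd_sub (h12.mul_left _) (h13.mul_left _)) (h23.mul_left _)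
  have d3 : (p : ℤ) ^ s ∣ 2 * (a₃ * (b₁ * b₂)) := by
    have : 2 * (a₃ * (b₁ * b₂)) =
        b₂ * (a₁ * b₃ + a₃ * b₁) - b₃ * (a₁ * b₂ + a₂ * b₁) + b₁ * (a₂ * b₃ + a₃ * b₂) := by
      ring
    rw [this]
    exact dvd_add (dvd_sub (h13.mul_left _) (h12.mul_left _)) (h23.mul_left _)
  -- p^s is coprime to 2 and to b₁
  have hcop2 : IsCoprime ((p : ℤ) ^ s) 2 := by
    apply IsCoprime.pow_left
    exact_mod_cast Nat.isCoprime_iff_coprime.mpr (hodd.coprime_two_right)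
  have hcopb : IsCoprime ((p : ℤ) ^ s) b₁ := by
    apply IsCoprime.pow_left
    exact (((Int.prime_iff_natAbs_prime.mpr (by simpa using hp))).coprime_iff_not_dvd).mpr hb1
  have e2 : (p : ℤ) ^ s ∣ a₂ * b₃ := by
    have h := hcop2.dvd_of_dvd_mul_left d2
    rw [show a₂ * (b₁ * b₃) = a₂ * b₃ * b₁ by ring] at h
    exact hcopb.dvd_of_dvd_mul_right h
  have e3 : (p : ℤ) ^ s ∣ a₃ * b₂ := by
    have h := hcop2.dvd_of_dvd_mul_left d3
    rw [show a₃ * (b₁ * b₂) = a₃ * b₂ * b₁ by ring] at h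
    exact hcopb.dvd_of_dvd_mul_right h
  -- valuation contradiction
  rw [padicValInt_dvd_iff] at e2 e3 h2 h3
  push_neg at h2 h3
  have v2 := e2.resolve_left (mul_ne_zero ha2 hb3)
  have v3 := e3.resolve_left (mul_ne_zero ha3 hb2)
  rw [padicValInt.mul ha2 hb3] at v2
  rw [padicValInt.mul ha3 hb2] at v3
  rw [padicValInt.mul ha2 hb2] at h2
  rw [padicValInt.mul ha3 hb3] at h3
  have h2' := h2.2
  have h3' := h3.2
  omega

theorem stmt_1 (p : ℕ) (hp : p.Prime) (hodd : Odd p) (s : ℕ) (hs : 1 ≤ s)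
    (a₁ a₂ a₃ b₁ b₂ b₃ : ℤ)
    (h1 : ¬ ((p : ℤ) ^ s ∣ a₁ * b₁)) (h2 : ¬ ((p : ℤ) ^ s ∣ a₂ * b₂))
    (h3 : ¬ ((p : ℤ) ^ s ∣ a₃ * b₃))
    (h12 : (p : ℤ) ^ s ∣ a₁ * b₂ + a₂ * b₁)
    (h13 : (p : ℤ) ^ s ∣ a₁ * b₃ + a₃ * b₁)
    (h23 : (p : ℤ) ^ s ∣ a₂ * b₃ + a₃ * b₂) :
    (p : ℤ) ∣ b₁ ∧ (p : ℤ) ∣ b₂ ∧ (p : ℤ) ∣ b₃ := by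
  exact ⟨key p hp hodd s a₁ a₂ a₃ b₁ b₂ b₃ h2 h3 h12 h13 h23,
    key p hp hodd s a₂ a₁ a₃ b₂ b₁ b₃ h1 h3 (by rwa [add_comm] at h12) h23 h13,
    key p hp hodd s a₃ a₁ a₂ b₃ b₁ b₂ h1 h2 (by rwa [add_comm] at h13)
      (by rwa [add_comm] at h23) h12⟩
end

section
/- Let $p$ be an odd prime and $s \geq 1$. There do not exist integers $a_1, a_2, a_3, b_1, b_2, b_3$ such that $a_i b_i \not\equiv 0 \pmod{p^s}$ for each $i$, $a_i b_j + a_j b_i \equiv 0 \pmod{p^s}$ for all $i \neq j$, and $\gcd(b_1, b_2, b_3, p) = 1$. -/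
private lemma aux_val (p : ℕ) (hp : p.Prime) (s : ℕ) (x y : ℤ)
    (hx : ¬ (p : ℤ) ^ s ∣ x) (hy : ¬ (p : ℤ) ^ s ∣ y) :
    ¬ (p : ℤ) ^ (s + s) ∣ x * y := by
  have hx0 : x ≠ 0 := by rintro rfl; exact hx (dvd_zero _)
  have hy0 : y ≠ 0 := by rintro rfl; exact hy (dvd_zero _)
  intro h
  have hx' : ¬ p ^ s ∣ x.natAbs := by
    intro hd
    exact hx (by rwa [← Int.natAbs_dvd_natAbs, Int.natAbs_pow, Int.natAbs_natCast] )
  have hy' : ¬ p ^ s ∣ y.natAbs := by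
    intro hd
    exact hy (by rwa [← Int.natAbs_dvd_natAbs, Int.natAbs_pow, Int.natAbs_natCast] )
  have h' : p ^ (s + s) ∣ (x * y).natAbs := by
    rwa [← Int.natAbs_dvd_natAbs, Int.natAbs_pow, Int.natAbs_natCast] at h
  rw [Int.natAbs_mul] at h'
  have hxn : x.natAbs ≠ 0 := Int.natAbs_ne_zero.mpr hx0
  have hyn : y.natAbs ≠ 0 := Int.natAbs_ne_zero.mpr hy0
  rw [hp.pow_dvd_iff_le_factorization hxn, not_le] at hx'
  rw [hp.pow_dvd_iff_le_factorization hyn, not_le] at hy'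
  rw [hp.pow_dvd_iff_le_factorization (mul_ne_zero hxn hyn),
    Nat.factorization_mul hxn hyn] at h'
  simp only [Finsupp.add_apply] at h'
  omega

private lemma key_s2 (p s : ℕ) (hp : p.Prime) (x u y v : ℤ)
    (h1 : ¬ (p : ℤ) ^ s ∣ x * u) (h2 : ¬ (p : ℤ) ^ s ∣ y * v)
    (h3 : (p : ℤ) ^ s ∣ x * v) (h4 : (p : ℤ) ^ s ∣ y * u) : False := by
  apply aux_val p hp s _ _ h1 h2
  have h := mul_dvd_mul h3 h4
  rw [← pow_add] at h
  have : x * u * (y * v) = x * v * (y * u) := by ring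
  rwa [this]

theorem stmt_2 (p : ℕ) (hp : p.Prime) (hodd : Odd p) (s : ℕ) (hs : 1 ≤ s) :
    ¬ ∃ a₁ a₂ a₃ b₁ b₂ b₃ : ℤ,
      (¬ ((p : ℤ) ^ s ∣ a₁ * b₁)) ∧ (¬ ((p : ℤ) ^ s ∣ a₂ * b₂)) ∧
      (¬ ((p : ℤ) ^ s ∣ a₃ * b₃)) ∧
      ((p : ℤ) ^ s ∣ a₁ * b₂ + a₂ * b₁) ∧
      ((p : ℤ) ^ s ∣ a₁ * b₃ + a₃ * b₁) ∧
      ((p : ℤ) ^ s ∣ a₂ * b₃ + a₃ * b₂) ∧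
      Int.gcd (Int.gcd (Int.gcd b₁ b₂) b₃) (p : ℤ) = 1 := by
  rintro ⟨a₁, a₂, a₃, b₁, b₂, b₃, h1, h2, h3, h12, h13, h23, hg⟩
  have hp' : Prime (p : ℤ) := Nat.prime_iff_prime_int.mp hp
  have hp2 : ¬ (p : ℤ) ∣ 2 := by
    intro h
    have hpn : p ∣ 2 := by
      have := Int.natAbs_dvd_natAbs.mpr h
      simpa using this
    have := (Nat.prime_dvd_prime_iff_eq hp Nat.prime_two).mp hpn
    rw [this] at hodd
    exact (Nat.not_odd_iff_even.mpr even_two) hodd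
  have hcop2 : IsCoprime ((p : ℤ) ^ s) 2 :=
    (((Prime.coprime_iff_not_dvd hp').mpr hp2).pow_left)
  -- p^s divides each aᵢ bⱼ bₖ
  have d1 : (p : ℤ) ^ s ∣ a₁ * b₂ * b₃ := by
    apply hcop2.dvd_of_dvd_mul_left
    have h := dvd_sub (dvd_add (h12.mul_right b₃) (h13.mul_right b₂)) (h23.mul_right b₁)
    have e : (a₁ * b₂ + a₂ * b₁) * b₃ + (a₁ * b₃ + a₃ * b₁) * b₂ - (a₂ * b₃ + a₃ * b₂) * b₁
        = 2 * (a₁ * b₂ * b₃) := by ring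
    rwa [e] at h
  have d2 : (p : ℤ) ^ s ∣ a₂ * b₁ * b₃ := by
    apply hcop2.dvd_of_dvd_mul_left
    have h := dvd_sub (dvd_add (h12.mul_right b₃) (h23.mul_right b₁)) (h13.mul_right b₂)
    have e : (a₁ * b₂ + a₂ * b₁) * b₃ + (a₂ * b₃ + a₃ * b₂) * b₁ - (a₁ * b₃ + a₃ * b₁) * b₂
        = 2 * (a₂ * b₁ * b₃) := by ring
    rwa [e] at h
  have d3 : (p : ℤ) ^ s ∣ a₃ * b₁ * b₂ := by
    apply hcop2.dvd_of_dvd_mul_left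
    have h := dvd_sub (dvd_add (h13.mul_right b₂) (h23.mul_right b₁)) (h12.mul_right b₃)
    have e : (a₁ * b₃ + a₃ * b₁) * b₂ + (a₂ * b₃ + a₃ * b₂) * b₁ - (a₁ * b₂ + a₂ * b₁) * b₃
        = 2 * (a₃ * b₁ * b₂) := by ring
    rwa [e] at h
  -- p does not divide some bᵢ
  have hnot : ¬ (p : ℤ) ∣ b₁ ∨ ¬ (p : ℤ) ∣ b₂ ∨ ¬ (p : ℤ) ∣ b₃ := by
    by_contra h
    push_neg at h
    obtain ⟨hb1, hb2, hb3⟩ := h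
    have hpg : (p : ℤ) ∣ ((Int.gcd (Int.gcd (Int.gcd b₁ b₂) b₃) (p : ℤ) : ℕ) : ℤ) :=
      Int.dvd_coe_gcd (Int.dvd_coe_gcd (Int.dvd_coe_gcd hb1 hb2) hb3) dvd_rfl
    rw [hg] at hpg
    have := Int.le_of_dvd one_pos hpg
    have := hp.two_le
    omega
  rcases hnot with hb | hb | hb
  · have hc : IsCoprime ((p : ℤ) ^ s) b₁ :=
      ((Prime.coprime_iff_not_dvd hp').mpr hb).pow_left
    have e2 : (p : ℤ) ^ s ∣ a₂ * b₃ := by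
      apply hc.dvd_of_dvd_mul_left
      rwa [show b₁ * (a₂ * b₃) = a₂ * b₁ * b₃ by ring]
    have e3 : (p : ℤ) ^ s ∣ a₃ * b₂ := by
      apply hc.dvd_of_dvd_mul_left
      rwa [show b₁ * (a₃ * b₂) = a₃ * b₁ * b₂ by ring]
    exact key_s2 p s hp a₂ b₂ a₃ b₃ h2 h3 e2 e3
  · have hc : IsCoprime ((p : ℤ) ^ s) b₂ :=
      ((Prime.coprime_iff_not_dvd hp').mpr hb).pow_left
    have e1 : (p : ℤ) ^ s ∣ a₁ * b₃ := by
      apply hc.dvd_of_dvd_mul_left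
      rwa [show b₂ * (a₁ * b₃) = a₁ * b₂ * b₃ by ring]
    have e3 : (p : ℤ) ^ s ∣ a₃ * b₁ := by
      apply hc.dvd_of_dvd_mul_left
      rwa [show b₂ * (a₃ * b₁) = a₃ * b₁ * b₂ by ring]
    exact key_s2 p s hp a₁ b₁ a₃ b₃ h1 h3 e1 e3
  · have hc : IsCoprime ((p : ℤ) ^ s) b₃ :=
      ((Prime.coprime_iff_not_dvd hp').mpr hb).pow_left
    have e1 : (p : ℤ) ^ s ∣ a₁ * b₂ := by
      apply hc.dvd_of_dvd_mul_left
      rwa [show b₃ * (a₁ * b₂) = a₁ * b₂ * b₃ by ring]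
    have e2 : (p : ℤ) ^ s ∣ a₂ * b₁ := by
      apply hc.dvd_of_dvd_mul_left
      rwa [show b₃ * (a₂ * b₁) = a₂ * b₁ * b₃ by ring]
    exact key_s2 p s hp a₁ b₁ a₂ b₂ h1 h2 e1 e2
end

section
/- Let $K$ and $H$ be finite commutative groups of coprime orders, $\Gamma = K \times H$, and let $(g_1,\ldots,g_\theta; \chi_1,\ldots,\chi_\theta)$ be a quantum linear space datum for $\Gamma$ with characters valued in a field of characteristic zero. Write $g_i = (k_i, h_i)$ and $\chi_i = \zeta_i \cdot \eta_i$ where $\zeta_i$ factors through $K$ and $\eta_i$ through $H$. Then for every $i \neq j$, $\eta_j(h_i)\eta_i(h_j) = 1$ and $\zeta_j(k_i)\zeta_i(k_j) = 1$, and for every $i$, $\eta_i(h_i) \neq 1$ or $\zeta_i(k_i) \neq 1$. -/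
/-- A quantum linear space datum for a commutative group `Γ` over a field `k`. -/
def IsQLSDatum {Γ k : Type*} [CommGroup Γ] [Field k] {ι : Type*}
    (g : ι → Γ) (χ : ι → (Γ →* kˣ)) : Prop :=
  (∀ i, χ i (g i) ≠ 1) ∧ ∀ i j, i ≠ j → χ j (g i) * χ i (g j) = 1

theorem stmt_17 {K H k : Type*} [CommGroup K] [CommGroup H] [Fintype K] [Fintype H]
    [Field k] [CharZero k]
    (hco : Nat.Coprime (Fintype.card K) (Fintype.card H))
    {ι : Type*} (g : ι → K × H) (χ : ι → (K × H →* kˣ))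
    (ζ : ι → (K →* kˣ)) (η : ι → (H →* kˣ))
    (hfac : ∀ i (x : K × H), χ i x = ζ i x.1 * η i x.2)
    (hdatum : IsQLSDatum g χ) :
    (∀ i j, i ≠ j →
        η j (g i).2 * η i (g j).2 = 1 ∧ ζ j (g i).1 * ζ i (g j).1 = 1) ∧
    ∀ i, η i (g i).2 ≠ 1 ∨ ζ i (g i).1 ≠ 1 := by
  obtain ⟨h1, h2⟩ := hdatum
  have key : ∀ (a b : kˣ), a ^ Fintype.card K = 1 → b ^ Fintype.card H = 1 →
      a * b = 1 → a = 1 ∧ b = 1 := by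
    intro a b ha hb hab
    have hba : a = b⁻¹ := eq_inv_of_mul_eq_one_left hab
    have ha' : a ^ Fintype.card H = 1 := by
      rw [hba, inv_pow, hb, inv_one]
    have h1 : orderOf a ∣ Nat.gcd (Fintype.card K) (Fintype.card H) :=
      Nat.dvd_gcd (orderOf_dvd_of_pow_eq_one ha) (orderOf_dvd_of_pow_eq_one ha')
    rw [hco] at h1
    have ha1 : a = 1 := orderOf_eq_one_iff.mp (Nat.dvd_one.mp h1)
    refine ⟨ha1, ?_⟩
    rw [ha1, one_mul] at hab
    exact hab
  have powK : ∀ (i : ι) (x : K), (ζ i x) ^ Fintype.card K = 1 := by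
    intro i x
    rw [← map_pow, pow_card_eq_one, map_one]
  have powH : ∀ (i : ι) (x : H), (η i x) ^ Fintype.card H = 1 := by
    intro i x
    rw [← map_pow, pow_card_eq_one, map_one]
  constructor
  · intro i j hij
    have := h2 i j hij
    rw [hfac, hfac] at this
    have heq : (ζ j (g i).1 * ζ i (g j).1) * (η j (g i).2 * η i (g j).2) = 1 := by
      rw [← this, mul_mul_mul_comm]
    have hK : (ζ j (g i).1 * ζ i (g j).1) ^ Fintype.card K = 1 := by
      rw [mul_pow, powK, powK, one_mul]
    have hH : (η j (g i).2 * η i (g j).2) ^ Fintype.card H = 1 := by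
      rw [mul_pow, powH, powH, one_mul]
    obtain ⟨hz, he⟩ := key _ _ hK hH heq
    exact ⟨he, hz⟩
  · intro i
    by_contra hcon
    push_neg at hcon
    apply h1 i
    rw [hfac, hcon.1, hcon.2, one_mul]
end

section
/- Let $p$ be an odd prime, $s \ge 1$, and let $a_1, b_1, b_2, b_3$ be integers with $a_1 = p^t \widetilde{a_1}$ where $p \nmid \widetilde{a_1}$ and $t \ge 0$. Assume $p^s \mid a_1 b_2 b_3$, $p \nmid b_1$, and that there are integers $a_2, a_3$ with $p^s \mid a_1 b_2 + a_2 b_1$, $p^s \mid a_1 b_3 + a_3 b_1$, $p^s \nmid a_2 b_2$, and $p^s \nmid a_3 b_3$. Then one obtains a contradiction; i.e., no such integers exist. -/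
theorem stmt_18 (p : ℕ) (hp : p.Prime) (hodd : Odd p) (s : ℕ) (hs : 1 ≤ s)
    (t : ℕ) (a₁ a₁' b₁ b₂ b₃ a₂ a₃ : ℤ)
    (ha₁ : a₁ = (p : ℤ) ^ t * a₁') (ha₁' : ¬ ((p : ℤ) ∣ a₁'))
    (hdvd : (p : ℤ) ^ s ∣ a₁ * b₂ * b₃)
    (hb₁ : ¬ ((p : ℤ) ∣ b₁))
    (h12 : (p : ℤ) ^ s ∣ a₁ * b₂ + a₂ * b₁)
    (h13 : (p : ℤ) ^ s ∣ a₁ * b₃ + a₃ * b₁)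
    (h2 : ¬ ((p : ℤ) ^ s ∣ a₂ * b₂))
    (h3 : ¬ ((p : ℤ) ^ s ∣ a₃ * b₃)) :
    False := by
  haveI : Fact p.Prime := ⟨hp⟩
  have hppos : (0:ℤ) < (p:ℤ) := by exact_mod_cast hp.pos
  have hpne : ((p:ℤ)) ≠ 0 := ne_of_gt hppos
  -- nonzeroness
  have ha₁'0 : a₁' ≠ 0 := fun h => ha₁' (h ▸ dvd_zero _)
  have hb₂0 : b₂ ≠ 0 := by
    rintro rfl; exact h2 (by simp)
  have hb₃0 : b₃ ≠ 0 := by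
    rintro rfl; exact h3 (by simp)
  have ha₂0 : a₂ ≠ 0 := by
    rintro rfl; exact h2 (by simp)
  have ha₃0 : a₃ ≠ 0 := by
    rintro rfl; exact h3 (by simp)
  set h := padicValInt p b₂ with hh
  set j := padicValInt p b₃ with hj
  have va₁' : padicValInt p a₁' = 0 := by
    by_contra hv
    exact ha₁' (by simpa using (padicValInt_dvd_iff 1 a₁').mpr (Or.inr (by omega)))
  have vpt : padicValInt p ((p:ℤ)^t) = t := by
    unfold padicValInt
    rw [Int.natAbs_pow, Int.natAbs_natCast]
    exact padicValNat.prime_pow t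
  -- s ≤ t + h + j
  have hsum : s ≤ t + h + j := by
    have := (padicValInt_dvd_iff s (a₁ * b₂ * b₃)).mp hdvd
    rcases this with h0 | hle
    · exact absurd h0 (by
        rw [ha₁]; exact mul_ne_zero (mul_ne_zero (mul_ne_zero (pow_ne_zero _ hpne) ha₁'0) hb₂0) hb₃0)
    · rw [ha₁, padicValInt.mul (mul_ne_zero (mul_ne_zero (pow_ne_zero _ hpne) ha₁'0) hb₂0) hb₃0,
        padicValInt.mul (mul_ne_zero (pow_ne_zero _ hpne) ha₁'0) hb₂0,
        padicValInt.mul (pow_ne_zero _ hpne) ha₁'0, va₁', vpt] at hle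
      omega
  -- key step: for (b, a, v) with the congruence, t + 2*v < s
  have key : ∀ b a : ℤ, b ≠ 0 → a ≠ 0 →
      (p : ℤ) ^ s ∣ a₁ * b + a * b₁ → ¬ ((p : ℤ) ^ s ∣ a * b) →
      t + 2 * padicValInt p b < s := by
    intro b a hb0 ha0 hcong hnd
    set v := padicValInt p b with hv
    -- first show ¬ (s ≤ t + v): else p^s ∣ a₁ * b, so p^s ∣ a * b₁, so p^s ∣ a, contra
    have hth : ∀ k : ℕ, k ≤ s → k ≤ t + v → (p:ℤ)^k ∣ a := by
      intro k hks hktv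
      obtain ⟨c, hc⟩ := (padicValInt_dvd_iff v b).mpr (Or.inr le_rfl)
      have h1 : (p:ℤ)^k ∣ a₁ * b := by
        refine (pow_dvd_pow (p:ℤ) hktv).trans ?_
        rw [ha₁, hc, pow_add]
        exact ⟨a₁' * c, by ring⟩
      have h2' : (p:ℤ)^k ∣ a * b₁ := by
        have := dvd_sub ((pow_dvd_pow (p:ℤ) hks).trans hcong) h1
        simpa using this
      have hcop : IsCoprime ((p:ℤ)^k) b₁ :=
        IsCoprime.pow_left (((Nat.prime_iff_prime_int.mp hp).coprime_iff_not_dvd).mpr hb₁)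
      exact hcop.dvd_of_dvd_mul_right h2'
    have hvlt : t + v < s := by
      by_contra hge
      push_neg at hge
      exact hnd ((hth s le_rfl hge).mul_right b)
    have hdva : (p:ℤ)^(t+v) ∣ a := hth (t+v) (le_of_lt hvlt) le_rfl
    -- then p^(t+2v) ∣ a*b, so t+2v < s
    by_contra hge
    push_neg at hge
    apply hnd
    calc (p:ℤ)^s ∣ (p:ℤ)^(t+2*v) := pow_dvd_pow _ hge
    _ ∣ a * b := by
        have : (p:ℤ)^(t+2*v) = (p:ℤ)^(t+v) * (p:ℤ)^v := by rw [← pow_add]; ring_nf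
        rw [this]
        exact mul_dvd_mul hdva ((padicValInt_dvd_iff v b).mpr (Or.inr le_rfl))
  have k2 := key b₂ a₂ hb₂0 ha₂0 h12 h2
  have k3 := key b₃ a₃ hb₃0 ha₃0 h13 h3
  omega
end
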